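/- For every cluster s ∈ Σ, the cluster s is coloured blue if and only if |s ∩ R₂| is odd and |s ∩ R₁| is even. -/

import Mathlib

/-- Colours of roots and clusters. -/
inductive Colour : Type
  | red | blue | purple | black
deriving DecidableEq

/-- A cluster picture on a finite set `R`: a collection of nonempty subsets of `R`
containing `R` and all singletons, any two of which are nested or disjoint. -/
def IsClusterPicture {α : Type*} [DecidableEq α] (R : Finset α) (CP : Set (Finset α)) : Prop :=
  (∀ s ∈ CP, s.Nonempty ∧ s ⊆ R) ∧ R ∈ CP ∧ (∀ r ∈ R, ({r} : Finset α) ∈ CP) ∧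
    ∀ s ∈ CP, ∀ t ∈ CP, s ⊆ t ∨ t ⊆ s ∨ s ∩ t = ∅

/-- `t` is a child of `s`: a maximal cluster properly contained in `s`. -/
def IsChildOf {α : Type*} [DecidableEq α] (CP : Set (Finset α)) (t s : Finset α) : Prop :=
  t ∈ CP ∧ t ⊂ s ∧ ∀ u ∈ CP, u ⊂ s → t ⊆ u → u = t

/-- The number of children of `s` coloured red or purple. -/
noncomputable def aCount {α : Type*} [DecidableEq α] (CP : Set (Finset α)) (col : Finset α → Colour)
    (s : Finset α) : ℕ :=
  Set.ncard {t : Finset α | IsChildOf CP t s ∧ (col t = Colour.red ∨ col t = Colour.purple)}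

/-- The number of children of `s` coloured blue or purple. -/
noncomputable def bCount {α : Type*} [DecidableEq α] (CP : Set (Finset α)) (col : Finset α → Colour)
    (s : Finset α) : ℕ :=
  Set.ncard {t : Finset α | IsChildOf CP t s ∧ (col t = Colour.blue ∨ col t = Colour.purple)}

/-- `col` is the recursive colouring of the clusters of the cluster picture `CP`
induced by the colouring `c` of the roots. -/
def IsColouring {α : Type*} [DecidableEq α] (R : Finset α) (CP : Set (Finset α))
    (c : α → Colour) (col : Finset α → Colour) : Prop :=
  (∀ r ∈ R, col {r} = c r) ∧
    ∀ s ∈ CP, 2 ≤ s.card →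
      ((Odd (aCount CP col s) ∧ Even (bCount CP col s)) → col s = Colour.red) ∧
      ((Odd (bCount CP col s) ∧ Even (aCount CP col s)) → col s = Colour.blue) ∧
      ((Odd (aCount CP col s) ∧ Odd (bCount CP col s)) → col s = Colour.purple) ∧
      ((Even (aCount CP col s) ∧ Even (bCount CP col s)) → col s = Colour.black)

/-- A cluster is chromatic if it is red, blue or purple. -/
def Chromatic {β : Type*} (col : β → Colour) (t : β) : Prop :=
  col t = Colour.red ∨ col t = Colour.blue ∨ col t = Colour.purple

lemma children_finite {α : Type*} [DecidableEq α] (CP : Set (Finset α)) (s : Finset α) :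
    {t : Finset α | IsChildOf CP t s}.Finite := by
  apply Set.Finite.subset (s.powerset.finite_toSet)
  intro t ht
  simp only [Finset.coe_powerset, Set.mem_preimage, Set.mem_powerset_iff]
  exact_mod_cast ht.2.1.subset

lemma exists_child {α : Type*} [DecidableEq α] {R : Finset α} {CP : Set (Finset α)}
    (hCP : IsClusterPicture R CP) {s : Finset α} (hs : s ∈ CP) (h2 : 2 ≤ s.card)
    {r : α} (hr : r ∈ s) : ∃ t, IsChildOf CP t s ∧ r ∈ t := by
  set S : Set (Finset α) := {u | u ∈ CP ∧ u ⊂ s ∧ r ∈ u} with hS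
  have hfin : S.Finite := by
    apply Set.Finite.subset (s.powerset.finite_toSet)
    intro t ht
    simp only [Finset.coe_powerset, Set.mem_preimage, Set.mem_powerset_iff]
    exact_mod_cast ht.2.1.subset
  have hrR : r ∈ R := (hCP.1 s hs).2 hr
  have hne : S.Nonempty := by
    refine ⟨{r}, hCP.2.2.1 r hrR, ?_, Finset.mem_singleton_self r⟩
    refine Finset.ssubset_iff_of_subset (Finset.singleton_subset_iff.2 hr) |>.2 ?_
    have : 1 < s.card := h2
    obtain ⟨x, hx, y, hy, hxy⟩ := Finset.one_lt_card.1 this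
    rcases eq_or_ne x r with h | h
    · exact ⟨y, hy, by simp [← h, hxy.symm]⟩
    · exact ⟨x, hx, by simp [h]⟩
  obtain ⟨t, htS, hmax⟩ := Set.Finite.exists_maximalFor id S hfin hne
  refine ⟨t, ⟨htS.1, htS.2.1, ?_⟩, htS.2.2⟩
  intro u hu hus htu
  exact Finset.Subset.antisymm (hmax ⟨hu, hus, htu (htS.2.2)⟩ htu) htu

lemma children_disjoint {α : Type*} [DecidableEq α] {R : Finset α} {CP : Set (Finset α)}
    (hCP : IsClusterPicture R CP) {s t t' : Finset α} (ht : IsChildOf CP t s)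
    (ht' : IsChildOf CP t' s) (hne : t ≠ t') : Disjoint t t' := by
  rcases hCP.2.2.2 t ht.1 t' ht'.1 with h | h | h
  · exact absurd (ht.2.2 t' ht'.1 ht'.2.1 h) hne.symm
  · exact absurd (ht'.2.2 t ht.1 ht.2.1 h) hne
  · exact Finset.disjoint_iff_inter_eq_empty.2 h

lemma key_parity {α : Type*} [DecidableEq α] (R : Finset α)
    (c : α → Colour) (hc : ∀ r ∈ R, c r = Colour.red ∨ c r = Colour.blue)
    (CP : Set (Finset α)) (hCP : IsClusterPicture R CP)
    (col : Finset α → Colour) (hcol : IsColouring R CP c col) :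
    ∀ n : ℕ, ∀ s ∈ CP, s.card ≤ n →
      (Odd ((s ∩ R.filter (fun r => c r = Colour.red)).card) ↔
        (col s = Colour.red ∨ col s = Colour.purple)) ∧
      (Odd ((s ∩ R.filter (fun r => c r = Colour.blue)).card) ↔
        (col s = Colour.blue ∨ col s = Colour.purple)) := by
  intro n
  induction n with
  | zero =>
    intro s hs hcard
    have := (hCP.1 s hs).1.card_pos
    omega
  | succ n ih =>
    intro s hs hcard
    by_cases h1 : s.card = 1
    · obtain ⟨r, rfl⟩ := Finset.card_eq_one.1 h1
      have hrR : r ∈ R := (hCP.1 _ hs).2 (Finset.mem_singleton_self r)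
      have hcolr : col {r} = c r := hcol.1 r hrR
      rcases hc r hrR with h | h
      · have e1 : ({r} : Finset α) ∩ R.filter (fun x => c x = Colour.red) = {r} := by
          ext x; simp +contextual [Finset.mem_filter, Finset.mem_inter]
          rintro rfl; exact ⟨hrR, h⟩
        have e2 : ({r} : Finset α) ∩ R.filter (fun x => c x = Colour.blue) = ∅ := by
          ext x; simp only [Finset.mem_inter, Finset.mem_filter, Finset.mem_singleton,
            Finset.notMem_empty, iff_false]
          rintro ⟨rfl, -, h2⟩; rw [h] at h2; exact Colour.noConfusion h2
        rw [e1, e2, hcolr, h]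
        simp [Nat.odd_iff]
      · have e1 : ({r} : Finset α) ∩ R.filter (fun x => c x = Colour.red) = ∅ := by
          ext x; simp only [Finset.mem_inter, Finset.mem_filter, Finset.mem_singleton,
            Finset.notMem_empty, iff_false]
          rintro ⟨rfl, -, h2⟩; rw [h] at h2; exact Colour.noConfusion h2
        have e2 : ({r} : Finset α) ∩ R.filter (fun x => c x = Colour.blue) = {r} := by
          ext x; simp +contextual [Finset.mem_filter, Finset.mem_inter]
          rintro rfl; exact ⟨hrR, h⟩
        rw [e1, e2, hcolr, h]
        simp [Nat.odd_iff]
    · have h2 : 2 ≤ s.card := by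
        have := (hCP.1 s hs).1.card_pos
        omega
      classical
      set C : Finset (Finset α) := (children_finite CP s).toFinset with hC
      have hmemC : ∀ t, t ∈ C ↔ IsChildOf CP t s := by
        intro t; simp [hC, Set.Finite.mem_toFinset]
      -- cover and disjointness
      have hcover : ∀ X : Finset α, s ∩ X = C.biUnion (fun t => t ∩ X) := by
        intro X
        ext r
        simp only [Finset.mem_inter, Finset.mem_biUnion]
        constructor
        · rintro ⟨hrs, hrX⟩
          obtain ⟨t, ht, hrt⟩ := exists_child hCP hs h2 hrs
          exact ⟨t, (hmemC t).2 ht, hrt, hrX⟩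
        · rintro ⟨t, htC, hrt, hrX⟩
          exact ⟨((hmemC t).1 htC).2.1.subset hrt, hrX⟩
      have hcardsum : ∀ X : Finset α, (s ∩ X).card = ∑ t ∈ C, (t ∩ X).card := by
        intro X
        rw [hcover X]
        apply Finset.card_biUnion
        intro t htC t' ht'C hne
        exact Disjoint.mono Finset.inter_subset_left Finset.inter_subset_left
          (children_disjoint hCP ((hmemC t).1 htC) ((hmemC t').1 ht'C) hne)
      -- IH for children
      have hih : ∀ t ∈ C,
          (Odd ((t ∩ R.filter (fun r => c r = Colour.red)).card) ↔
            (col t = Colour.red ∨ col t = Colour.purple)) ∧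
          (Odd ((t ∩ R.filter (fun r => c r = Colour.blue)).card) ↔
            (col t = Colour.blue ∨ col t = Colour.purple)) := by
        intro t htC
        have ht := (hmemC t).1 htC
        have : t.card < s.card := Finset.card_lt_card ht.2.1
        exact ih t ht.1 (by omega)
      -- aCount as a filter card
      have haC : aCount CP col s =
          (C.filter (fun t => col t = Colour.red ∨ col t = Colour.purple)).card := by
        rw [aCount, ← Set.ncard_coe_finset]
        congr 1
        ext t
        simp [hmemC t, Finset.mem_filter, Finset.mem_coe, and_comm]
      have hbC : bCount CP col s =
          (C.filter (fun t => col t = Colour.blue ∨ col t = Colour.purple)).card := by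
        rw [bCount, ← Set.ncard_coe_finset]
        congr 1
        ext t
        simp [hmemC t, Finset.mem_filter, Finset.mem_coe, and_comm]
      have ha : Odd ((s ∩ R.filter (fun r => c r = Colour.red)).card) ↔ Odd (aCount CP col s) := by
        have hfilt : C.filter (fun t => Odd ((t ∩ R.filter (fun r => c r = Colour.red)).card))
            = C.filter (fun t => col t = Colour.red ∨ col t = Colour.purple) :=
          Finset.filter_congr (fun t htC => by exact (hih t htC).1)
        rw [hcardsum, Finset.odd_sum_iff_odd_card_odd, hfilt, ← haC]
      have hb : Odd ((s ∩ R.filter (fun r => c r = Colour.blue)).card) ↔ Odd (bCount CP col s) := by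
        have hfilt : C.filter (fun t => Odd ((t ∩ R.filter (fun r => c r = Colour.blue)).card))
            = C.filter (fun t => col t = Colour.blue ∨ col t = Colour.purple) :=
          Finset.filter_congr (fun t htC => by exact (hih t htC).2)
        rw [hcardsum, Finset.odd_sum_iff_odd_card_odd, hfilt, ← hbC]
      obtain ⟨hred, hblue, hpurple, hblack⟩ := hcol.2 s hs h2
      rcases Nat.even_or_odd (aCount CP col s) with hA | hA <;>
        rcases Nat.even_or_odd (bCount CP col s) with hB | hB
      · have := hblack ⟨hA, hB⟩
        rw [this, ha, hb]
        simp [Nat.not_odd_iff_even.2 hA, Nat.not_odd_iff_even.2 hB]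
      · have := hblue ⟨hB, hA⟩
        rw [this, ha, hb]
        simp [Nat.not_odd_iff_even.2 hA, hB]
      · have := hred ⟨hA, hB⟩
        rw [this, ha, hb]
        simp [Nat.not_odd_iff_even.2 hB, hA]
      · have := hpurple ⟨hA, hB⟩
        rw [this, ha, hb]
        simp [hA, hB]

/-- A cluster is blue iff it contains an odd number of blue roots and an even
number of red roots. -/
theorem cluster_blue_iff {α : Type*} [DecidableEq α] (R : Finset α) (hR : R.Nonempty)
    (c : α → Colour) (hc : ∀ r ∈ R, c r = Colour.red ∨ c r = Colour.blue)
    (CP : Set (Finset α)) (hCP : IsClusterPicture R CP)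
    (col : Finset α → Colour) (hcol : IsColouring R CP c col)
    (s : Finset α) (hs : s ∈ CP) :
    col s = Colour.blue ↔
      Odd (s ∩ R.filter (fun r => c r = Colour.blue)).card ∧
        Even (s ∩ R.filter (fun r => c r = Colour.red)).card := by
  have key := key_parity R c hc CP hCP col hcol s.card s hs le_rfl
  constructor
  · intro h
    refine ⟨key.2.2 (Or.inl h), ?_⟩
    rw [← Nat.not_odd_iff_even]
    intro hodd
    rcases key.1.1 hodd with h' | h' <;> rw [h] at h' <;> exact Colour.noConfusion h'
  · rintro ⟨hb', ha'⟩
    rcases key.2.1 hb' with h | h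
    · exact h
    · exfalso
      rw [← Nat.not_odd_iff_even] at ha'
      exact ha' (key.1.2 (Or.inr h))
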